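/- arXiv:2207.06538 — 10 statements merged into one kernel-verified Lean document; each statement's English description precedes it below -/
import Mathlib

section
/- Let D ≥ 1 and let u, u', v, μ, y be D×D complex matrices and d, k ∈ ℂ such that u*v + v*u = d•μ + k•y and u'*v + v*u' = k•(1 : Matrix (Fin D) (Fin D) ℂ). Define the 2D×2D block matrices U = fromBlocks u u' 0 u, V = fromBlocks v 0 0 v, M = fromBlocks μ 0 0 μ, and Y = fromBlocks y 1 0 y (where 1 denotes the D×D identity). Then U*V + V*U = d•M + k•Y. -/
open Matrix

/-- The anticommutator relation `{u,v} = d•μ + k•y` together with `{u',v} = k•1` is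
preserved by the doubled (matryoshka) construction of equation (4.1). -/
theorem doubled_anticommutator (D : ℕ) (hD : 1 ≤ D)
    (u u' v μ y : Matrix (Fin D) (Fin D) ℂ) (d k : ℂ)
    (h1 : u * v + v * u = d • μ + k • y)
    (h2 : u' * v + v * u' = k • (1 : Matrix (Fin D) (Fin D) ℂ)) :
    (fromBlocks u u' 0 u) * (fromBlocks v 0 0 v)
      + (fromBlocks v 0 0 v) * (fromBlocks u u' 0 u)
      = d • (fromBlocks μ 0 0 μ) + k • (fromBlocks y 1 0 y) := by
  simp only [fromBlocks_multiply, fromBlocks_add, fromBlocks_smul, smul_zero,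
    Matrix.mul_zero, Matrix.zero_mul, add_zero, zero_add]
  rw [h1, h2]
end

section
/- Let D ≥ 1, N ≥ 1, let u, u', v, μ, y be D×D complex matrices, d, k ∈ ℂ, and λ : Fin N → ℂ, and suppose u*v + v*u = d•μ + k•y and u'*v + v*u' = k•(1 : Matrix (Fin D) (Fin D) ℂ). Define ND×ND matrices indexed by Fin N × Fin D: U_N((p,i),(q,j)) = u i j if p = q, λ p * u' i j if q = p+1, and 0 otherwise; Y_N((p,i),(q,j)) = y i j if p = q, λ p * (if i = j then 1 else 0) if q = p+1, and 0 otherwise; V_N((p,i),(q,j)) = v i j if p = q and 0 otherwise; M_N((p,i),(q,j)) = μ i j if p = q and 0 otherwise. Then U_N*V_N + V_N*U_N = d•M_N + k•Y_N. -/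
open Matrix

/-- The anticommutator relation between odd raising and odd lowering generators is preserved
by the N-fold nested matryoshka construction (equation (4.3)) with generalized Cabibbo
parameters `lam p`. -/
theorem matryoshka_N_anticommutator (D N : ℕ) (hD : 1 ≤ D) (hN : 1 ≤ N)
    (u u' v μ y : Matrix (Fin D) (Fin D) ℂ) (d k : ℂ) (lam : Fin N → ℂ)
    (h1 : u * v + v * u = d • μ + k • y)
    (h2 : u' * v + v * u' = k • (1 : Matrix (Fin D) (Fin D) ℂ))
    (UN YN VN MN : Matrix (Fin N × Fin D) (Fin N × Fin D) ℂ)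
    (hU : ∀ (p q : Fin N) (i j : Fin D),
      UN (p, i) (q, j) = if p = q then u i j
        else if (p : ℕ) + 1 = (q : ℕ) then lam p * u' i j else 0)
    (hY : ∀ (p q : Fin N) (i j : Fin D),
      YN (p, i) (q, j) = if p = q then y i j
        else if (p : ℕ) + 1 = (q : ℕ) then lam p * (if i = j then 1 else 0) else 0)
    (hV : ∀ (p q : Fin N) (i j : Fin D),
      VN (p, i) (q, j) = if p = q then v i j else 0)
    (hM : ∀ (p q : Fin N) (i j : Fin D),
      MN (p, i) (q, j) = if p = q then μ i j else 0) :
    UN * VN + VN * UN = d • MN + k • YN := by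
  ext ⟨p, i⟩ ⟨q, j⟩
  have h1' := congrFun (congrFun h1 i) j
  have h2' := congrFun (congrFun h2 i) j
  simp only [Matrix.add_apply, Matrix.mul_apply, Matrix.smul_apply, Matrix.one_apply,
    smul_eq_mul] at h1' h2'
  simp only [Matrix.add_apply, Matrix.mul_apply, Matrix.smul_apply, smul_eq_mul,
    Fintype.sum_prod_type, hU, hV, hY, hM]
  simp only [mul_ite, ite_mul, mul_zero, zero_mul, Finset.sum_ite_eq, Finset.sum_ite_eq',
    Finset.mem_univ, if_true, Finset.sum_ite_irrel, Finset.sum_const_zero]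
  rw [Finset.sum_eq_single_of_mem p (Finset.mem_univ p)
    (fun b _ hb => by simp [Ne.symm hb])]
  by_cases hpq : p = q
  · subst hpq
    simp only [if_pos rfl]
    exact h1'
  · simp only [hpq, if_false]
    by_cases hsucc : (p : ℕ) + 1 = (q : ℕ)
    · simp only [hsucc, if_true]
      have A : (∑ l : Fin D, lam p * u' i l * v l j) = lam p * ∑ l : Fin D, u' i l * v l j := by
        rw [Finset.mul_sum]; exact Finset.sum_congr rfl fun l _ => by ring
      have B : (∑ l : Fin D, v i l * (lam p * u' l j)) = lam p * ∑ l : Fin D, v i l * u' l j := by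
        rw [Finset.mul_sum]; exact Finset.sum_congr rfl fun l _ => by ring
      rw [A, B, ← mul_add, h2']
      split_ifs <;> ring
    · simp [hsucc]
end

section
/- Let D ≥ 1, N ≥ 1, let y, u, u' be D×D complex matrices with y*u − u*y = u and y*u' − u'*y = u', and let λ : Fin N → ℂ. Define ND×ND matrices indexed by Fin N × Fin D: U_N((p,i),(q,j)) = u i j if p = q, λ p * u' i j if q = p+1, and 0 otherwise; Y_N((p,i),(q,j)) = y i j if p = q, λ p * (if i = j then 1 else 0) if q = p+1, and 0 otherwise. Then Y_N*U_N − U_N*Y_N = U_N. -/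
open Matrix

/-! `U_N = 1 ⊗ u + S ⊗ u'` and `Y_N = 1 ⊗ y + S ⊗ 1`, where `S` is the weighted shift
`S p (p+1) = λ p`. By the mixed-product rule, bracketing with `1 ⊗ y` acts as `[y, ·]` on the
second tensor factor, while bracketing with `S ⊗ 1` brings in `[S, 1] = [S, S] = 0`; hence
`[Y_N, U_N] = 1 ⊗ [y, u] + S ⊗ [y, u'] = U_N`. -/

open scoped Kronecker

namespace Matrix

theorem kronecker_sub {R l m n p : Type*} [NonUnitalNonAssocRing R] (A : Matrix l m R)
    (B C : Matrix n p R) :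
    A ⊗ₖ (B - C) = A ⊗ₖ B - A ⊗ₖ C := by
  ext ⟨a, i⟩ ⟨b, j⟩
  simp only [kronecker_apply, sub_apply, mul_sub]

theorem commutator_one_kronecker_add_kronecker_one {R m n : Type*} [CommRing R] [Fintype m]
    [DecidableEq m] [Fintype n] [DecidableEq n] {S B : Matrix m m R} (hSB : Commute S B)
    (y v : Matrix n n R) :
    (1 ⊗ₖ y + S ⊗ₖ 1) * (B ⊗ₖ v) - (B ⊗ₖ v) * (1 ⊗ₖ y + S ⊗ₖ 1) = B ⊗ₖ (y * v - v * y) := by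
  simp only [add_mul, mul_add, ← mul_kronecker_mul, one_mul, mul_one, hSB.eq, kronecker_sub]
  abel

def weightedShift {R : Type*} [Zero R] {N : ℕ} (lam : Fin N → R) : Matrix (Fin N) (Fin N) R :=
  of fun p q => if (p : ℕ) + 1 = q then lam p else 0

theorem weightedShift_apply_self {R : Type*} [Zero R] {N : ℕ} (lam : Fin N → R) (p : Fin N) :
    weightedShift lam p p = 0 :=
  if_neg (Nat.succ_ne_self _)

end Matrix

theorem matryoshka_N_grading_general (D N : ℕ)
    (y u u' : Matrix (Fin D) (Fin D) ℂ)
    (hu : y * u - u * y = u)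
    (hu' : y * u' - u' * y = u')
    (lam : Fin N → ℂ)
    (UN YN : Matrix (Fin N × Fin D) (Fin N × Fin D) ℂ)
    (hU : ∀ (p q : Fin N) (i j : Fin D),
      UN (p, i) (q, j) = if p = q then u i j
        else if (p : ℕ) + 1 = (q : ℕ) then lam p * u' i j else 0)
    (hY : ∀ (p q : Fin N) (i j : Fin D),
      YN (p, i) (q, j) = if p = q then y i j
        else if (p : ℕ) + 1 = (q : ℕ) then lam p * (if i = j then 1 else 0) else 0) :
    YN * UN - UN * YN = UN := by
  set S := weightedShift lam
  have hUN : UN = 1 ⊗ₖ u + S ⊗ₖ u' := by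
    ext ⟨p, i⟩ ⟨q, j⟩
    rcases eq_or_ne p q with rfl | hpq
    · simp [hU, S, weightedShift_apply_self]
    · simp [hU, S, weightedShift, hpq]
  have hYN : YN = 1 ⊗ₖ y + S ⊗ₖ 1 := by
    ext ⟨p, i⟩ ⟨q, j⟩
    rcases eq_or_ne p q with rfl | hpq
    · simp [hY, S, weightedShift_apply_self]
    · rcases eq_or_ne i j with rfl | hij
      · simp [hY, S, weightedShift, hpq]
      · simp [hY, S, weightedShift, hpq, one_apply_ne hij, hij]
  set X := 1 ⊗ₖ y + S ⊗ₖ 1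
  calc YN * UN - UN * YN
      = (X * (1 ⊗ₖ u) - (1 ⊗ₖ u) * X) + (X * (S ⊗ₖ u') - (S ⊗ₖ u') * X) := by
        rw [hYN, hUN]; noncomm_ring
    _ = UN := by
        rw [commutator_one_kronecker_add_kronecker_one (Commute.one_right S),
          commutator_one_kronecker_add_kronecker_one (Commute.refl S), hu, hu', hUN]

/-- The hypercharge grading relation `[y,u] = u` is preserved by the N-fold matryoshka
replication of equation (4.3). -/
theorem matryoshka_N_grading (D N : ℕ) (hD : 1 ≤ D) (hN : 1 ≤ N)
    (y u u' : Matrix (Fin D) (Fin D) ℂ)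
    (hu : y * u - u * y = u)
    (hu' : y * u' - u' * y = u')
    (lam : Fin N → ℂ)
    (UN YN : Matrix (Fin N × Fin D) (Fin N × Fin D) ℂ)
    (hU : ∀ (p q : Fin N) (i j : Fin D),
      UN (p, i) (q, j) = if p = q then u i j
        else if (p : ℕ) + 1 = (q : ℕ) then lam p * u' i j else 0)
    (hY : ∀ (p q : Fin N) (i j : Fin D),
      YN (p, i) (q, j) = if p = q then y i j
        else if (p : ℕ) + 1 = (q : ℕ) then lam p * (if i = j then 1 else 0) else 0) :
    YN * UN - UN * YN = UN :=
  matryoshka_N_grading_general D N y u u' hu hu' lam UN YN hU hY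
end

section
/- Let D ≥ 1, let y be any D×D complex matrix, and let λ ∈ ℂ with λ ≠ 0. Then the 2D×2D block matrix Y = fromBlocks y (λ•1) 0 y is not diagonalizable: there do not exist an invertible 2D×2D complex matrix P and a function d : Fin D ⊕ Fin D → ℂ such that Y = P * Matrix.diagonal d * P⁻¹. -/
/-!
A diagonalizable matrix is annihilated by a separable polynomial `q` (the product of `X - c` over
its eigenvalues). For `b` commuting with `y`, a polynomial `p` evaluates on `fromBlocks y b 0 y` to
`fromBlocks (p y) (b * p' y) 0 (p y)`, so `q y = 0` and `b * q' y = 0`. Separability of `q` then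
makes `q' y` invertible, forcing `b = 0`; for `b = λ • 1` this means `λ = 0`.
-/

open Matrix Polynomial

theorem Polynomial.aeval_units_conj {R A : Type*} [CommSemiring R] [Semiring A] [Algebra R A]
    (u : Aˣ) (a : A) (p : R[X]) : aeval (↑u * a * ↑u⁻¹) p = ↑u * aeval a p * ↑u⁻¹ :=
  aeval_algHom_apply (MulSemiringAction.toAlgHom R A (ConjAct.toConjAct u)) a p

theorem Matrix.aeval_diagonal {R n : Type*} [CommSemiring R] [Fintype n] [DecidableEq n]
    (d : n → R) (p : R[X]) : aeval (diagonal d) p = diagonal fun i ↦ aeval (d i) p := by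
  rw [← diagonalAlgHom_apply R, aeval_algHom_apply, aeval_pi_apply]
  rfl

theorem Matrix.exists_separable_aeval_eq_zero_of_eq_conj_diagonal {K n : Type*} [Field K]
    [Fintype n] [DecidableEq n] {A P : Matrix n n K} {d : n → K} (hP : IsUnit P)
    (hA : A = P * diagonal d * P⁻¹) : ∃ q : K[X], q.Separable ∧ aeval A q = 0 := by
  classical
  obtain ⟨u, rfl⟩ := hP
  refine ⟨∏ c ∈ Finset.univ.image d, (X - C c), separable_prod_X_sub_C_iff'.2 fun _ _ _ _ ↦ id, ?_⟩
  have hdiag : aeval (diagonal d) (∏ c ∈ Finset.univ.image d, (X - C c)) = 0 := by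
    rw [aeval_diagonal, diagonal_eq_zero]
    funext i
    simpa [Finset.prod_eq_zero_iff] using ⟨i, sub_self _⟩
  rw [hA, ← coe_units_inv, aeval_units_conj, hdiag, mul_zero, zero_mul]

theorem Matrix.aeval_fromBlocks_of_commute {R n : Type*} [CommRing R] [Fintype n] [DecidableEq n]
    {y b : Matrix n n R} (h : Commute y b) (p : R[X]) :
    aeval (fromBlocks y b 0 y) p
      = fromBlocks (aeval y p) (b * aeval y (derivative p)) 0 (aeval y p) := by
  have mul_X : ∀ p : R[X],
      aeval (fromBlocks y b 0 y) p
        = fromBlocks (aeval y p) (b * aeval y (derivative p)) 0 (aeval y p) →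
      aeval (fromBlocks y b 0 y) (p * X)
        = fromBlocks (aeval y (p * X)) (b * aeval y (derivative (p * X))) 0 (aeval y (p * X)) := by
    intro p hp
    simp only [map_mul, hp, aeval_X, fromBlocks_multiply, derivative_mul, derivative_X, mul_one,
      map_add, mul_zero, zero_mul, add_zero, zero_add, mul_add, mul_assoc]
    rw [add_comm, (Algebra.commute_of_mem_adjoin_singleton_of_commute
      (aeval_mem_adjoin_singleton R y) h.symm).eq]
  induction p using Polynomial.induction_on with
  | C a =>
    simp [Algebra.algebraMap_eq_smul_one, ← fromBlocks_one, fromBlocks_smul]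
  | add p q hp hq =>
    simp only [map_add, mul_add, hp, hq, fromBlocks_add, add_zero]
  | monomial k a ih => simpa only [mul_assoc, ← pow_succ] using mul_X _ ih

theorem Matrix.eq_zero_of_separable_aeval_fromBlocks_eq_zero {K n : Type*} [Field K] [Fintype n]
    [DecidableEq n] {y b : Matrix n n K} (h : Commute y b) {q : K[X]} (hq : q.Separable)
    (hq0 : aeval (fromBlocks y b 0 y) q = 0) : b = 0 := by
  rw [aeval_fromBlocks_of_commute h, ← fromBlocks_zero, fromBlocks_inj] at hq0
  obtain ⟨hqy, hq'y, -, -⟩ := hq0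
  obtain ⟨r, s, hrs⟩ := hq
  have hunit : aeval y (derivative q) * aeval y s = 1 := by
    simpa [hqy, mul_comm s] using congrArg (aeval y) hrs
  calc b = b * aeval y (derivative q) * aeval y s := by rw [mul_assoc, hunit, mul_one]
    _ = 0 := by rw [hq'y, zero_mul]

theorem Matrix.eq_zero_of_fromBlocks_eq_conj_diagonal {K n : Type*} [Field K] [Fintype n]
    [DecidableEq n] {y b : Matrix n n K} (h : Commute y b) {P : Matrix (n ⊕ n) (n ⊕ n) K}
    {d : n ⊕ n → K} (hP : IsUnit P) (hY : fromBlocks y b 0 y = P * diagonal d * P⁻¹) :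
    b = 0 := by
  obtain ⟨q, hq, hq0⟩ := exists_separable_aeval_eq_zero_of_eq_conj_diagonal hP hY
  exact eq_zero_of_separable_aeval_fromBlocks_eq_zero h hq hq0

/-- The doubled matryoshka hypercharge matrix `fromBlocks y (λ•1) 0 y` with `λ ≠ 0` cannot
be diagonalized, because of its block Jordan structure (Section 4). -/
theorem doubled_hypercharge_not_diagonalizable (D : ℕ) (hD : 1 ≤ D)
    (y : Matrix (Fin D) (Fin D) ℂ) (lam : ℂ) (hlam : lam ≠ 0) :
    ¬ ∃ (P : Matrix (Fin D ⊕ Fin D) (Fin D ⊕ Fin D) ℂ) (d : Fin D ⊕ Fin D → ℂ),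
        IsUnit P ∧
          fromBlocks y (lam • (1 : Matrix (Fin D) (Fin D) ℂ)) 0 y
            = P * Matrix.diagonal d * P⁻¹ := by
  rintro ⟨P, d, hP, hY⟩
  have : NeZero D := ⟨by omega⟩
  have hb := eq_zero_of_fromBlocks_eq_conj_diagonal ((Commute.one_right y).smul_right lam) hP hY
  exact hlam ((smul_eq_zero.1 hb).resolve_right one_ne_zero)
end

section
/- Let D ≥ 1, N ≥ 2, let y be any D×D complex matrix, and let λ : Fin N → ℂ with λ p ≠ 0 for all p. Define the ND×ND matrix indexed by Fin N × Fin D: Y_N((p,i),(q,j)) = y i j if p = q, λ p * (if i = j then 1 else 0) if q = p+1 (i.e. p.val + 1 = q.val), and 0 otherwise. Then Y_N is not diagonalizable: there do not exist an invertible ND×ND complex matrix P and a function d : (Fin N × Fin D) → ℂ such that Y_N = P * Matrix.diagonal d * P⁻¹. -/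
/-!
Let `μ` be an eigenvalue of `y` with eigenvector `v`, and let `w` be `v` placed in block `1`.
Then `(Y_N - μ) w` is `λ 0 • v` placed in block `0`, which is nonzero, while `(Y_N - μ)² w = 0`
because nothing feeds into block `0`. For a diagonalizable matrix the kernels of `Y_N - μ` and
`(Y_N - μ)²` coincide, since conjugation reduces this to the diagonal case, where
`e k * (e k * u k) = 0` forces `e k * u k = 0`.
-/

open Matrix

namespace Matrix

variable {n R : Type*} [Fintype n] [DecidableEq n] [CommRing R]

theorem diagonal_mulVec_eq_zero_of_mul_self [NoZeroDivisors R] {e u : n → R}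
    (h : (diagonal e * diagonal e) *ᵥ u = 0) : diagonal e *ᵥ u = 0 := by
  funext k
  have hk := congrFun h k
  simp only [diagonal_mul_diagonal, mulVec_diagonal, Pi.zero_apply, mul_assoc] at hk ⊢
  rcases mul_eq_zero.mp hk with he | he
  · simp [he]
  · exact he

theorem conj_diagonal_mulVec_eq_zero_of_mul_self [NoZeroDivisors R] {P : Matrix n n R}
    (hP : IsUnit P) {e u : n → R}
    (h : (P * diagonal e * P⁻¹ * (P * diagonal e * P⁻¹)) *ᵥ u = 0) :
    (P * diagonal e * P⁻¹) *ᵥ u = 0 := by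
  have hPdet : IsUnit P.det := (isUnit_iff_isUnit_det P).mp hP
  have conj_mulVec_eq_zero_iff :
      ∀ M : Matrix n n R, (P * M * P⁻¹) *ᵥ u = 0 ↔ M *ᵥ (P⁻¹ *ᵥ u) = 0 := by
    intro M
    constructor
    · intro hM
      simpa [mulVec_mulVec, ← Matrix.mul_assoc, nonsing_inv_mul _ hPdet] using
        congrArg (P⁻¹ *ᵥ ·) hM
    · intro hM
      rw [← mulVec_mulVec, ← mulVec_mulVec, hM, mulVec_zero]
  have conj_sq : P * diagonal e * P⁻¹ * (P * diagonal e * P⁻¹) =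
      P * (diagonal e * diagonal e) * P⁻¹ := by
    simp only [Matrix.mul_assoc, nonsing_inv_mul_cancel_left _ _ hPdet]
  rw [conj_sq, conj_mulVec_eq_zero_iff] at h
  rw [conj_mulVec_eq_zero_iff]
  exact diagonal_mulVec_eq_zero_of_mul_self h

theorem conj_diagonal_sub_smul_one {P : Matrix n n R} (hP : IsUnit P) (d : n → R) (μ : R) :
    P * diagonal d * P⁻¹ - μ • 1 = P * diagonal (fun k => d k - μ) * P⁻¹ := by
  conv_lhs => rw [← mul_nonsing_inv P ((isUnit_iff_isUnit_det P).mp hP)]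
  rw [show diagonal (fun k => d k - μ) = diagonal d - μ • 1 by
    rw [smul_one_eq_diagonal, diagonal_sub]]
  simp only [Matrix.mul_sub, Matrix.sub_mul, Matrix.mul_smul, Matrix.smul_mul, Matrix.mul_one]

theorem exists_mulVec_eq_smul {K : Type*} [Field K] [IsAlgClosed K] [Nonempty n]
    (y : Matrix n n K) : ∃ (μ : K) (v : n → K), v ≠ 0 ∧ y *ᵥ v = μ • v := by
  obtain ⟨μ, hμ⟩ := Module.End.exists_eigenvalue (toLin' y)
  obtain ⟨v, hv⟩ := hμ.exists_hasEigenvector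
  exact ⟨μ, v, hv.2, by simpa using hv.apply_eq_smul⟩

end Matrix

theorem Function.uncurry_single_eq_zero_iff {ι κ M : Type*} [DecidableEq ι] [Zero M]
    {r : ι} {u : κ → M} : Function.uncurry (Pi.single r u) = 0 ↔ u = 0 :=
  (Function.uncurry_injective.eq_iff' rfl).trans Pi.single_eq_zero_iff

section Matryoshka

variable {R : Type*} [CommRing R] {N D : ℕ}

/-- The hypercharge matrix `Y_N` of equation (4.3), as a predicate on its entries. -/
def IsMatryoshka (y : Matrix (Fin D) (Fin D) R) (lam : Fin N → R)
    (YN : Matrix (Fin N × Fin D) (Fin N × Fin D) R) : Prop :=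
  ∀ (p q : Fin N) (i j : Fin D),
    YN (p, i) (q, j) = if p = q then y i j
      else if (p : ℕ) + 1 = (q : ℕ) then lam p * (if i = j then 1 else 0) else 0

variable {y : Matrix (Fin D) (Fin D) R} {lam : Fin N → R}
  {YN : Matrix (Fin N × Fin D) (Fin N × Fin D) R}

theorem IsMatryoshka.sub_smul_one_mulVec_single (hY : IsMatryoshka y lam YN) {μ : R}
    {u : Fin D → R} (hu : y *ᵥ u = μ • u) (r : Fin N) :
    (YN - μ • 1) *ᵥ Function.uncurry (Pi.single r u) =
      fun x => if (x.1 : ℕ) + 1 = r then lam x.1 * u x.2 else 0 := by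
  ext ⟨p, i⟩
  have hyu := congrFun hu i
  simp only [mulVec, dotProduct, Fintype.sum_prod_type] at hyu ⊢
  rw [Finset.sum_eq_single r (fun q _ hq => by simp [hq]) (by simp)]
  by_cases hpr : p = r
  · subst hpr
    simp [hY p p i, sub_mul, Finset.sum_sub_distrib, hyu, one_apply]
  · simp [hY p r i, hpr, one_apply]

theorem IsMatryoshka.sub_smul_one_mulVec_single_of_val_eq_zero (hY : IsMatryoshka y lam YN)
    {μ : R} {u : Fin D → R} (hu : y *ᵥ u = μ • u) {r : Fin N} (hr : (r : ℕ) = 0) :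
    (YN - μ • 1) *ᵥ Function.uncurry (Pi.single r u) = 0 := by
  rw [hY.sub_smul_one_mulVec_single hu]
  ext x
  simp [hr]

theorem IsMatryoshka.sub_smul_one_mulVec_single_of_val_eq_succ (hY : IsMatryoshka y lam YN)
    {μ : R} {u : Fin D → R} (hu : y *ᵥ u = μ • u) {p r : Fin N} (hpr : (p : ℕ) + 1 = r) :
    (YN - μ • 1) *ᵥ Function.uncurry (Pi.single r u) =
      Function.uncurry (Pi.single p (lam p • u)) := by
  rw [hY.sub_smul_one_mulVec_single hu]
  ext ⟨q, i⟩
  have hqp : (q : ℕ) + 1 = r ↔ q = p := by rw [← hpr, Fin.ext_iff]; omega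
  by_cases hq : q = p
  · subst hq
    simp [hpr]
  · simp [hqp, hq]

end Matryoshka

/-- The N-fold matryoshka hypercharge matrix of equation (4.3) with nonzero superdiagonal
couplings cannot be diagonalized, because of its nested Jordan block structure (Section 4). -/
theorem matryoshka_N_hypercharge_not_diagonalizable (D N : ℕ) (hD : 1 ≤ D) (hN : 2 ≤ N)
    (y : Matrix (Fin D) (Fin D) ℂ) (lam : Fin N → ℂ) (hlam : ∀ p, lam p ≠ 0)
    (YN : Matrix (Fin N × Fin D) (Fin N × Fin D) ℂ)
    (hY : ∀ (p q : Fin N) (i j : Fin D),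
      YN (p, i) (q, j) = if p = q then y i j
        else if (p : ℕ) + 1 = (q : ℕ) then lam p * (if i = j then 1 else 0) else 0) :
    ¬ ∃ (P : Matrix (Fin N × Fin D) (Fin N × Fin D) ℂ) (d : Fin N × Fin D → ℂ),
        IsUnit P ∧ YN = P * Matrix.diagonal d * P⁻¹ := by
  rintro ⟨P, d, hP, hYP⟩
  have hYN : IsMatryoshka y lam YN := hY
  have : Nonempty (Fin D) := ⟨⟨0, hD⟩⟩
  obtain ⟨μ, v, hv0, hv⟩ := y.exists_mulVec_eq_smul
  let p₀ : Fin N := ⟨0, by omega⟩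
  let p₁ : Fin N := ⟨1, hN⟩
  have hBw : (YN - μ • 1) *ᵥ Function.uncurry (Pi.single p₁ v) =
      Function.uncurry (Pi.single p₀ (lam p₀ • v)) :=
    hYN.sub_smul_one_mulVec_single_of_val_eq_succ hv rfl
  have hBw_ne : (YN - μ • 1) *ᵥ Function.uncurry (Pi.single p₁ v) ≠ 0 := by
    rw [hBw, ne_eq, Function.uncurry_single_eq_zero_iff]
    exact smul_ne_zero (hlam p₀) hv0
  have hBBw : (YN - μ • 1) *ᵥ ((YN - μ • 1) *ᵥ Function.uncurry (Pi.single p₁ v)) = 0 := by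
    rw [hBw]
    exact hYN.sub_smul_one_mulVec_single_of_val_eq_zero (by rw [mulVec_smul, hv, smul_comm]) rfl
  rw [mulVec_mulVec] at hBBw
  rw [hYP, conj_diagonal_sub_smul_one hP] at hBBw hBw_ne
  exact hBw_ne (conj_diagonal_mulVec_eq_zero_of_mul_self hP hBBw)
end

section
/- Let m, n ≥ 1, let A be an m×m complex matrix, C an n×n complex matrix, and B an m×n complex matrix. If the (m+n)×(m+n) block upper-triangular matrix fromBlocks A B 0 C is diagonalizable (i.e. equal to P * Δ * P⁻¹ for some invertible P and diagonal Δ), then A is diagonalizable and C is diagonalizable. -/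
/-!
Over an algebraically closed field a matrix is diagonalizable exactly when some squarefree
polynomial annihilates it. Every polynomial in `fromBlocks A B 0 C` is again block upper
triangular, with diagonal blocks `p(A)` and `p(C)`, so a squarefree annihilator of the block
matrix annihilates both `A` and `C`.
-/

open Matrix Polynomial Module

namespace Polynomial

theorem aeval_units_conj_s10 {R A : Type*} [CommSemiring R] [Semiring A] [Algebra R A]
    (u : Aˣ) (x : A) (p : R[X]) : aeval (↑u * x * ↑u⁻¹ : A) p = ↑u * aeval x p * ↑u⁻¹ := by
  simpa [ConjAct.units_smul_def] using
    aeval_algHom_apply (MulSemiringAction.toAlgEquiv R A (ConjAct.toConjAct u)).toAlgHom x p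

end Polynomial

namespace Module.End

theorem exists_basis_eigenvectors {K V : Type*} [Field K] [AddCommGroup V] [Module K V]
    (f : End K V) (h : ⨆ μ, f.eigenspace μ = ⊤) :
    ∃ (s : Set V) (b : Basis s K V) (d : s → K), ∀ i, f (b i) = d i • b i := by
  obtain ⟨s, hs, hspan, hli⟩ := exists_linearIndependent K (⋃ μ, (f.eigenspace μ : Set V))
  have htop : ⊤ ≤ Submodule.span K (Set.range ((↑) : s → V)) := by
    rw [Subtype.range_coe, hspan, ← Submodule.iSup_eq_span, h]
  have heig (i : s) : ∃ μ : K, f i = μ • (i : V) := by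
    obtain ⟨μ, hμ⟩ := Set.mem_iUnion.mp (hs i.2)
    exact ⟨μ, mem_eigenspace_iff.mp hμ⟩
  choose d hd using heig
  exact ⟨s, Basis.mk hli htop, d, fun i => by simpa using hd i⟩

end Module.End

namespace Matrix

variable {n : Type*} [Fintype n] [DecidableEq n]

def IsDiagonalizable {R : Type*} [CommRing R] (A : Matrix n n R) : Prop :=
  ∃ (P : Matrix n n R) (d : n → R), IsUnit P ∧ A = P * diagonal d * P⁻¹

theorem aeval_diagonal_s10 {R : Type*} [CommSemiring R] (d : n → R) (p : R[X]) :
    aeval (diagonal d) p = diagonal fun i => aeval (d i) p := by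
  simpa [aeval_pi_apply] using aeval_algHom_apply (diagonalAlgHom R) d p

theorem aeval_fromBlocks_zero {m : Type*} [Fintype m] [DecidableEq m] {R : Type*}
    [CommSemiring R] (A : Matrix m m R) (B : Matrix m n R) (C : Matrix n n R) (p : R[X]) :
    ∃ B', aeval (fromBlocks A B 0 C) p = fromBlocks (aeval A p) B' 0 (aeval C p) := by
  induction p using Polynomial.induction_on with
  | C a => exact ⟨0, by simp [algebraMap_eq_diagonal, fromBlocks_diagonal]⟩
  | add p q hp hq =>
    obtain ⟨B₁, h₁⟩ := hp
    obtain ⟨B₂, h₂⟩ := hq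
    exact ⟨B₁ + B₂, by simp [h₁, h₂, fromBlocks_add]⟩
  | monomial k a ih =>
    obtain ⟨B', h'⟩ := ih
    refine ⟨aeval A (Polynomial.C a * X ^ k) * B + B' * C, ?_⟩
    simp only [pow_succ, ← mul_assoc, map_mul (aeval _) _ X, aeval_X] at h' ⊢
    rw [h', fromBlocks_multiply]
    simp

theorem IsDiagonalizable.exists_squarefree_aeval_eq_zero {K : Type*} [Field K]
    {A : Matrix n n K} (hA : A.IsDiagonalizable) : ∃ p : K[X], Squarefree p ∧ aeval A p = 0 := by
  classical
  obtain ⟨P, d, hP, rfl⟩ := hA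
  set p : K[X] := ∏ μ ∈ Finset.univ.image d, (X - Polynomial.C μ)
  have hroot (i : n) : aeval (d i) p = 0 := by
    rw [map_prod]
    exact Finset.prod_eq_zero (Finset.mem_image_of_mem d (Finset.mem_univ i)) (by simp)
  refine ⟨p, (separable_prod_X_sub_C_iff' (f := id).mpr fun _ _ _ _ => id).squarefree, ?_⟩
  rw [← hP.unit_spec, ← coe_units_inv, aeval_units_conj_s10, aeval_diagonal_s10]
  simp [hroot]

theorem isDiagonalizable_of_basis_eigenvectors {K : Type*} [Field K] {A : Matrix n n K}
    (b : Basis n K (n → K)) (d : n → K) (h : ∀ i, A *ᵥ b i = d i • b i) :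
    A.IsDiagonalizable := by
  set P : Matrix n n K := of fun i j => b j i
  have hP : IsUnit P := linearIndependent_cols_iff_isUnit.mp b.linearIndependent
  have hAP : A * P = P * diagonal d := by
    ext i j
    rw [mul_diagonal]
    simpa [P, mul_apply, mulVec, dotProduct, mul_comm] using congrFun (h j) i
  refine ⟨P, d, hP, ?_⟩
  rw [← hAP, mul_nonsing_inv_cancel_right _ _ ((isUnit_iff_isUnit_det P).mp hP)]

theorem isDiagonalizable_of_squarefree_aeval_eq_zero {K : Type*} [Field K] [IsAlgClosed K]
    {A : Matrix n n K} {p : K[X]} (hp : Squarefree p) (hA : aeval A p = 0) :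
    A.IsDiagonalizable := by
  have hss : End.IsSemisimple (toLin' A) := by
    refine End.isSemisimple_of_squarefree_aeval_eq_zero hp ?_
    have := aeval_algHom_apply (toLinAlgEquiv' (R := K) (n := n)).toAlgHom A p
    rw [hA, map_zero] at this
    exact this
  obtain ⟨s, b, d, hb⟩ := End.exists_basis_eigenvectors _ hss.iSup_eigenspace_eq_top
  let e := b.indexEquiv (Pi.basisFun K n)
  exact isDiagonalizable_of_basis_eigenvectors (b.reindex e) (d ∘ e.symm)
    fun i => by simpa using hb (e.symm i)

end Matrix

theorem blockTriangular_diagonalizable_general (m n : ℕ)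
    (A : Matrix (Fin m) (Fin m) ℂ) (C : Matrix (Fin n) (Fin n) ℂ)
    (B : Matrix (Fin m) (Fin n) ℂ)
    (h : ∃ (P : Matrix (Fin m ⊕ Fin n) (Fin m ⊕ Fin n) ℂ) (d : Fin m ⊕ Fin n → ℂ),
        IsUnit P ∧ fromBlocks A B 0 C = P * Matrix.diagonal d * P⁻¹) :
    (∃ (P : Matrix (Fin m) (Fin m) ℂ) (d : Fin m → ℂ),
        IsUnit P ∧ A = P * Matrix.diagonal d * P⁻¹)
      ∧ (∃ (P : Matrix (Fin n) (Fin n) ℂ) (d : Fin n → ℂ),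
        IsUnit P ∧ C = P * Matrix.diagonal d * P⁻¹) := by
  obtain ⟨p, hp, hM⟩ := IsDiagonalizable.exists_squarefree_aeval_eq_zero h
  obtain ⟨B', hB'⟩ := aeval_fromBlocks_zero A B C p
  rw [hM, ← fromBlocks_zero, fromBlocks_inj] at hB'
  exact ⟨isDiagonalizable_of_squarefree_aeval_eq_zero hp hB'.1.symm,
    isDiagonalizable_of_squarefree_aeval_eq_zero hp hB'.2.2.2.symm⟩

/-- If a block upper-triangular matrix `fromBlocks A B 0 C` is diagonalizable, then so are
its diagonal blocks `A` and `C` (restriction/quotient principle, Section 4). -/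
theorem blockTriangular_diagonalizable (m n : ℕ) (hm : 1 ≤ m) (hn : 1 ≤ n)
    (A : Matrix (Fin m) (Fin m) ℂ) (C : Matrix (Fin n) (Fin n) ℂ)
    (B : Matrix (Fin m) (Fin n) ℂ)
    (h : ∃ (P : Matrix (Fin m ⊕ Fin n) (Fin m ⊕ Fin n) ℂ) (d : Fin m ⊕ Fin n → ℂ),
        IsUnit P ∧ fromBlocks A B 0 C = P * Matrix.diagonal d * P⁻¹) :
    (∃ (P : Matrix (Fin m) (Fin m) ℂ) (d : Fin m → ℂ),
        IsUnit P ∧ A = P * Matrix.diagonal d * P⁻¹)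
      ∧ (∃ (P : Matrix (Fin n) (Fin n) ℂ) (d : Fin n → ℂ),
        IsUnit P ∧ C = P * Matrix.diagonal d * P⁻¹) :=
  blockTriangular_diagonalizable_general m n A C B h
end

section
/- Let V₁ and V₂ be nonzero finite-dimensional vector spaces over ℂ, let f₁ ∈ End(V₁) and f₂ ∈ End(V₂) be linear endomorphisms, let c₁, c₂ ∈ ℂ and k₁, k₂ ≥ 1 be such that the minimal polynomial of fᵢ is (X − cᵢ)^{kᵢ} for i = 1, 2. Then the minimal polynomial of the endomorphism f₁ ⊗ id + id ⊗ f₂ of V₁ ⊗[ℂ] V₂ is (X − (c₁ + c₂))^{k₁ + k₂ − 1}. -/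
/-!
Write `fᵢ = cᵢ + gᵢ` with `gᵢ` nilpotent of class `kᵢ`. Then
`f₁ ⊗ 1 + 1 ⊗ f₂ - (c₁ + c₂) = g₁ ⊗ 1 + 1 ⊗ g₂` is a sum of two commuting nilpotents. In the
binomial expansion of its `n`-th power every term vanishes for `n = k₁ + k₂ - 1`, while for
`n = k₁ + k₂ - 2` only `binom(n, k₁ - 1) • g₁^(k₁-1) ⊗ g₂^(k₂-1)` survives; this is nonzero because
a tensor product of nonzero maps over a field is nonzero and the binomial coefficient does not
vanish in characteristic zero. Finally, the minimal polynomial of `c + g` with `g` nilpotent is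
`(X - c)^(nilpotency class of g)`.
-/

open Polynomial TensorProduct

namespace Commute

variable {R : Type*} [Semiring R] {x y : R} {m n : ℕ}

theorem add_pow_add_eq_choose_smul_of_pow_succ_eq_zero (h_comm : Commute x y)
    (hx : x ^ (m + 1) = 0) (hy : y ^ (n + 1) = 0) :
    (x + y) ^ (m + n) = (m + n).choose m • (x ^ m * y ^ n) := by
  rw [h_comm.add_pow', Finset.sum_eq_single_of_mem (m, n) (by simp)]
  rintro ⟨i, j⟩ hij hne
  rw [Finset.HasAntidiagonal.mem_antidiagonal] at hij
  obtain hi | hj : m + 1 ≤ i ∨ n + 1 ≤ j := by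
    by_contra! h
    exact hne (Prod.ext (by omega) (by omega))
  · rw [pow_eq_zero_of_le hi hx, zero_mul, smul_zero]
  · rw [pow_eq_zero_of_le hj hy, mul_zero, smul_zero]

theorem nilpotencyClass_add_eq (h_comm : Commute x y)
    (hx : x ^ (m + 1) = 0) (hy : y ^ (n + 1) = 0) (h : (m + n).choose m • (x ^ m * y ^ n) ≠ 0) :
    nilpotencyClass (x + y) = m + n + 1 := by
  rw [nilpotencyClass_eq_succ_iff, h_comm.add_pow_add_eq_choose_smul_of_pow_succ_eq_zero hx hy]
  exact ⟨h_comm.add_pow_eq_zero_of_add_le_succ_of_pow_eq_zero hx hy (by omega), h⟩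

end Commute

section Minpoly

variable {K A : Type*} [Field K] [Ring A] [Algebra K A] {x : A} {c : K}

theorem minpoly_dvd_X_sub_C_pow_iff {n : ℕ} :
    minpoly K x ∣ (X - C c) ^ n ↔ (x - algebraMap K A c) ^ n = 0 := by
  rw [minpoly.dvd_iff, map_pow, map_sub, aeval_X, aeval_C]

theorem nilpotencyClass_sub_algebraMap_of_minpoly_eq {m : ℕ} (h : minpoly K x = (X - C c) ^ m) :
    nilpotencyClass (x - algebraMap K A c) = m := by
  have hzero : {n | (x - algebraMap K A c) ^ n = 0} = Set.Ici m := by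
    ext n
    rw [Set.mem_ofPred_eq, ← minpoly_dvd_X_sub_C_pow_iff, h,
      pow_dvd_pow_iff (X_sub_C_ne_zero c) (not_isUnit_X_sub_C c), Set.mem_Ici]
  rw [nilpotencyClass, hzero, csInf_Ici]

theorem minpoly_eq_X_sub_C_pow_nilpotencyClass (h : IsNilpotent (x - algebraMap K A c)) :
    minpoly K x = (X - C c) ^ nilpotencyClass (x - algebraMap K A c) := by
  obtain ⟨n, hn⟩ := h
  have hdvd := minpoly_dvd_X_sub_C_pow_iff.mpr hn
  obtain ⟨m, -, hassoc⟩ := (dvd_prime_pow (prime_X_sub_C c) n).mp hdvd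
  have hint : IsIntegral K x :=
    minpoly.ne_zero_iff.mp (ne_zero_of_dvd_ne_zero (pow_ne_zero n (X_sub_C_ne_zero c)) hdvd)
  have hmin : minpoly K x = (X - C c) ^ m :=
    eq_of_monic_of_associated (minpoly.monic hint) ((monic_X_sub_C c).pow m) hassoc
  rw [nilpotencyClass_sub_algebraMap_of_minpoly_eq hmin, hmin]

end Minpoly

namespace TensorProduct

variable {R M N P Q : Type*} [CommSemiring R] [NoZeroDivisors R]
  [AddCommMonoid M] [Module R M] [AddCommMonoid N] [Module R N]
  [AddCommMonoid P] [Module R P] [AddCommMonoid Q] [Module R Q]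

theorem tmul_ne_zero [Module.Projective R M] [Module.Projective R N] {x : M} {y : N}
    (hx : x ≠ 0) (hy : y ≠ 0) : x ⊗ₜ[R] y ≠ 0 := by
  obtain ⟨φ, hφ⟩ := Module.Projective.exists_dual_ne_zero R hx
  obtain ⟨ψ, hψ⟩ := Module.Projective.exists_dual_ne_zero R hy
  intro h
  have hpair : TensorProduct.lid R R (map φ ψ (x ⊗ₜ y)) = φ x * ψ y := by
    rw [map_tmul, lid_tmul, smul_eq_mul]
  rw [h, map_zero, map_zero] at hpair
  exact mul_ne_zero hφ hψ hpair.symm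

theorem map_ne_zero [Module.Projective R P] [Module.Projective R Q]
    {f : M →ₗ[R] P} {g : N →ₗ[R] Q} (hf : f ≠ 0) (hg : g ≠ 0) : map f g ≠ 0 := by
  obtain ⟨v, hv⟩ := DFunLike.ne_iff.mp hf
  obtain ⟨w, hw⟩ := DFunLike.ne_iff.mp hg
  intro h
  apply tmul_ne_zero (R := R) hv hw
  rw [← map_tmul, h, LinearMap.zero_apply]

end TensorProduct

namespace LinearMap

theorem commute_rTensor_lTensor {R M N : Type*} [CommSemiring R]
    [AddCommMonoid M] [Module R M] [AddCommMonoid N] [Module R N]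
    (f : Module.End R M) (g : Module.End R N) : Commute (f.rTensor N) (g.lTensor M) := by
  rw [commute_iff_eq, Module.End.mul_eq_comp, Module.End.mul_eq_comp, rTensor_comp_lTensor,
    lTensor_comp_rTensor]

theorem rTensor_add_lTensor_sub_algebraMap {R M N : Type*} [CommRing R]
    [AddCommGroup M] [Module R M] [AddCommGroup N] [Module R N]
    (f : Module.End R M) (g : Module.End R N) (a b : R) :
    f.rTensor N + g.lTensor M - algebraMap R _ (a + b) =
      (f - algebraMap R _ a).rTensor N + (g - algebraMap R _ b).lTensor M := by
  ext v w
  simp [Module.algebraMap_end_apply, smul_tmul']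
  abel

theorem nilpotencyClass_rTensor_add_lTensor {K M N : Type*} [Field K] [CharZero K]
    [AddCommGroup M] [Module K M] [AddCommGroup N] [Module K N]
    {f : Module.End K M} {g : Module.End K N} {m n : ℕ}
    (hf : nilpotencyClass f = m + 1) (hg : nilpotencyClass g = n + 1) :
    nilpotencyClass (f.rTensor N + g.lTensor M) = m + n + 1 := by
  rw [nilpotencyClass_eq_succ_iff] at hf hg
  refine (commute_rTensor_lTensor f g).nilpotencyClass_add_eq
    (by rw [rTensor_pow, hf.1, rTensor_zero]) (by rw [lTensor_pow, hg.1, lTensor_zero]) ?_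
  rw [rTensor_pow, lTensor_pow, Module.End.mul_eq_comp, rTensor_comp_lTensor]
  rw [← Nat.cast_smul_eq_nsmul K]
  exact smul_ne_zero (Nat.cast_ne_zero.mpr (Nat.choose_pos (by omega)).ne')
    (TensorProduct.map_ne_zero hf.2 hg.2)

end LinearMap

theorem minpoly_tensor_sum_general
    (V₁ V₂ : Type*) [AddCommGroup V₁] [Module ℂ V₁] [AddCommGroup V₂] [Module ℂ V₂]
    (f₁ : V₁ →ₗ[ℂ] V₁) (f₂ : V₂ →ₗ[ℂ] V₂) (c₁ c₂ : ℂ) (k₁ k₂ : ℕ)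
    (hk₁ : 1 ≤ k₁) (hk₂ : 1 ≤ k₂)
    (h₁ : minpoly ℂ f₁ = (X - C c₁) ^ k₁)
    (h₂ : minpoly ℂ f₂ = (X - C c₂) ^ k₂) :
    minpoly ℂ (LinearMap.rTensor V₂ f₁ + LinearMap.lTensor V₁ f₂)
      = (X - C (c₁ + c₂)) ^ (k₁ + k₂ - 1) := by
  obtain ⟨a, rfl⟩ := Nat.exists_eq_add_of_le' hk₁
  obtain ⟨b, rfl⟩ := Nat.exists_eq_add_of_le' hk₂
  have hclass := LinearMap.nilpotencyClass_rTensor_add_lTensor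
    (nilpotencyClass_sub_algebraMap_of_minpoly_eq h₁)
    (nilpotencyClass_sub_algebraMap_of_minpoly_eq h₂)
  rw [← LinearMap.rTensor_add_lTensor_sub_algebraMap] at hclass
  rw [minpoly_eq_X_sub_C_pow_nilpotencyClass
    (isNilpotent_of_pos_nilpotencyClass (by rw [hclass]; omega)), hclass]
  congr 1
  omega

/-- If the minimal polynomial of `fᵢ` is `(X - cᵢ)^kᵢ`, then the minimal polynomial of
`f₁ ⊗ id + id ⊗ f₂` on `V₁ ⊗ V₂` is `(X - (c₁ + c₂))^(k₁ + k₂ - 1)` (key linear-algebra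
fact of the appendix Lemma; the exponent there is corrected to `k₁ + k₂ - 1`). -/
theorem minpoly_tensor_sum
    (V₁ V₂ : Type*) [AddCommGroup V₁] [Module ℂ V₁] [AddCommGroup V₂] [Module ℂ V₂]
    [Nontrivial V₁] [Nontrivial V₂]
    [FiniteDimensional ℂ V₁] [FiniteDimensional ℂ V₂]
    (f₁ : V₁ →ₗ[ℂ] V₁) (f₂ : V₂ →ₗ[ℂ] V₂) (c₁ c₂ : ℂ) (k₁ k₂ : ℕ)
    (hk₁ : 1 ≤ k₁) (hk₂ : 1 ≤ k₂)
    (h₁ : minpoly ℂ f₁ = (X - C c₁) ^ k₁)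
    (h₂ : minpoly ℂ f₂ = (X - C c₂) ^ k₂) :
    minpoly ℂ (LinearMap.rTensor V₂ f₁ + LinearMap.lTensor V₁ f₂)
      = (X - C (c₁ + c₂)) ^ (k₁ + k₂ - 1) :=
  minpoly_tensor_sum_general V₁ V₂ f₁ f₂ c₁ c₂ k₁ k₂ hk₁ hk₂ h₁ h₂
end

section
/- Let W be a nonzero finite-dimensional vector space over ℂ, let x ∈ End(W) and λ ∈ ℂ be such that x − λ•id is nilpotent, let n ≥ 2, let N ∈ End(ℂⁿ) be the nilpotent Jordan block (N e_i = e_{i+1} for i < n, N e_n = 0, where e_1, …, e_n is the standard basis), and let c ∈ ℂ with c ≠ 0. Then the endomorphisms x ⊗ id and x ⊗ id + c•(id ⊗ N) of W ⊗[ℂ] ℂⁿ are not conjugate: there is no linear automorphism g of W ⊗[ℂ] ℂⁿ with g ∘ (x ⊗ id) ∘ g⁻¹ = x ⊗ id + c•(id ⊗ N). -/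
open TensorProduct

/-- On `W ⊗ ℂⁿ`, with `x - λ•id` nilpotent, `N` the nilpotent Jordan block and `c ≠ 0`,
the operators `x ⊗ id` and `x ⊗ id + c•(id ⊗ N)` are not conjugate (core of the 'only if'
direction of the appendix Lemma). -/
theorem jordan_twist_not_conjugate
    (W : Type*) [AddCommGroup W] [Module ℂ W] [Nontrivial W] [FiniteDimensional ℂ W]
    (x : W →ₗ[ℂ] W) (lam : ℂ)
    (hnil : IsNilpotent (x - lam • (LinearMap.id : W →ₗ[ℂ] W)))
    (n : ℕ) (hn : 2 ≤ n)
    (N : (Fin n → ℂ) →ₗ[ℂ] (Fin n → ℂ))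
    (hN : ∀ i : Fin n, N (Pi.single i 1)
      = if h : (i : ℕ) + 1 < n then Pi.single (⟨(i : ℕ) + 1, h⟩ : Fin n) 1 else 0)
    (c : ℂ) (hc : c ≠ 0) :
    ¬ ∃ g : (W ⊗[ℂ] (Fin n → ℂ)) ≃ₗ[ℂ] (W ⊗[ℂ] (Fin n → ℂ)),
        (g.toLinearMap ∘ₗ LinearMap.rTensor (Fin n → ℂ) x ∘ₗ g.symm.toLinearMap)
          = LinearMap.rTensor (Fin n → ℂ) x + c • LinearMap.lTensor W N := by
  classical
  rintro ⟨g, hg⟩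
  set a : W →ₗ[ℂ] W := x - lam • LinearMap.id with ha
  have hex : ∃ k, a ^ k = 0 := hnil
  set p := Nat.find hex with hpdef
  have hp0 : a ^ p = 0 := Nat.find_spec hex
  have hppos : 1 ≤ p := by
    by_contra h
    have hp : p = 0 := by omega
    rw [hp, pow_zero] at hp0
    obtain ⟨w, hw⟩ := exists_ne (0 : W)
    have : (1 : W →ₗ[ℂ] W) w = (0 : W →ₗ[ℂ] W) w := by rw [hp0]
    simp at this
    exact hw this
  have hpm : a ^ (p - 1) ≠ 0 := Nat.find_min hex (by omega)
  obtain ⟨w, hw⟩ : ∃ w, (a ^ (p - 1)) w ≠ 0 := by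
    by_contra h
    push_neg at h
    exact hpm (LinearMap.ext fun v => by simpa using h v)
  -- the basis vector e₀ of ℂⁿ
  have hn0 : 0 < n := by omega
  set e0 : Fin n → ℂ := Pi.single (⟨0, hn0⟩ : Fin n) 1 with he0
  -- powers of N on e₀
  have hNk : ∀ k (hkn : k < n), (N ^ k) e0 = Pi.single (⟨k, hkn⟩ : Fin n) 1 := by
    intro k
    induction k with
    | zero => intro hkn; simp [he0]
    | succ k ih =>
      intro hkn
      have hk' : k < n := by omega
      rw [pow_succ', Module.End.mul_apply, ih hk', hN ⟨k, hk'⟩]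
      exact dif_pos hkn
  have hNn : (N ^ n) e0 = 0 := by
    have hnn : N ^ n = N * N ^ (n - 1) := by
      rw [← pow_succ']
      congr 1
      omega
    rw [hnn, Module.End.mul_apply, hNk (n - 1) (by omega), hN ⟨n - 1, by omega⟩]
    rw [dif_neg (by simp; omega)]
  have hNzero : ∀ k, n ≤ k → (N ^ k) e0 = 0 := by
    intro k hk
    have : k = (k - n) + n := by omega
    rw [this, pow_add, Module.End.mul_apply, hNn, map_zero]
  -- the operators
  set S : Module.End ℂ (W ⊗[ℂ] (Fin n → ℂ)) := LinearMap.rTensor (Fin n → ℂ) x with hS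
  set A : Module.End ℂ (W ⊗[ℂ] (Fin n → ℂ)) := LinearMap.rTensor (Fin n → ℂ) a with hA'
  set B : Module.End ℂ (W ⊗[ℂ] (Fin n → ℂ)) := c • LinearMap.lTensor W N with hB
  set m := (p - 1) + (n - 1) with hm
  have hpm' : p ≤ m := by omega
  -- A = S - lam • 1
  have hA : A = S - lam • 1 := by
    rw [hA', ha, LinearMap.rTensor_sub, LinearMap.rTensor_smul, LinearMap.rTensor_id]
    rfl
  -- the linear equiv as a unit of the endomorphism ring
  set u : (Module.End ℂ (W ⊗[ℂ] (Fin n → ℂ)))ˣ :=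
    ⟨g.toLinearMap, g.symm.toLinearMap,
      LinearMap.ext fun v => by simp,
      LinearMap.ext fun v => by simp⟩ with hu
  have hg' : (u : Module.End ℂ (W ⊗[ℂ] (Fin n → ℂ))) * S * ↑u⁻¹ = S + B := hg
  have hgv : ∀ v, g (S (g.symm v)) = S v + B v := by
    intro v
    have h := LinearMap.ext_iff.1 hg v
    simpa using h
  have hAv : ∀ v : W ⊗[ℂ] (Fin n → ℂ), A v = S v - lam • v := by
    intro v
    rw [hA]
    simp
  have hconj : (u : Module.End ℂ (W ⊗[ℂ] (Fin n → ℂ))) * A * ↑u⁻¹ = A + B := by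
    apply LinearMap.ext
    intro v
    show g.toLinearMap (A (g.symm.toLinearMap v)) = A v + B v
    rw [hAv, hAv, map_sub, map_smul]
    simp only [LinearEquiv.coe_coe, LinearEquiv.apply_symm_apply, hgv]
    abel
  have ham : a ^ m = 0 := by
    have : m = p + (m - p) := by omega
    rw [this, pow_add, hp0, zero_mul]
  have hABm : (A + B) ^ m = 0 := by
    rw [← hconj, Units.conj_pow, hA', LinearMap.rTensor_pow, ham, LinearMap.rTensor_zero,
      mul_zero, zero_mul]
  -- commutation
  have hcomm0 : Commute A (LinearMap.lTensor W N) := by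
    show A * LinearMap.lTensor W N = LinearMap.lTensor W N * A
    show A ∘ₗ LinearMap.lTensor W N = LinearMap.lTensor W N ∘ₗ A
    rw [hA', LinearMap.rTensor_comp_lTensor, LinearMap.lTensor_comp_rTensor]
  have hcomm : Commute A B := hcomm0.smul_right c
  -- evaluate (A + B)^m at w ⊗ₜ e0
  have heval : ((A + B) ^ m) (w ⊗ₜ[ℂ] e0)
      = (m.choose (p - 1)) • (c ^ (n - 1)) •
          (((a ^ (p - 1)) w) ⊗ₜ[ℂ] (Pi.single (⟨n - 1, by omega⟩ : Fin n) 1)) := by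
    rw [hcomm.add_pow, LinearMap.coe_sum, Finset.sum_apply]
    rw [Finset.sum_eq_single_of_mem (p - 1) (Finset.mem_range.2 (by omega))]
    · have hterm : ∀ k, (A ^ k * B ^ (m - k) * (m.choose k : Module.End ℂ (W ⊗[ℂ] (Fin n → ℂ))))
          (w ⊗ₜ[ℂ] e0)
          = (m.choose k) • (c ^ (m - k)) • (((a ^ k) w) ⊗ₜ[ℂ] ((N ^ (m - k)) e0)) := by
        intro k
        have hc1 : A ^ k * B ^ (m - k) * (m.choose k : Module.End ℂ (W ⊗[ℂ] (Fin n → ℂ)))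
            = (m.choose k) • (A ^ k * B ^ (m - k)) := by
          rw [(Nat.cast_commute (m.choose k) (A ^ k * B ^ (m - k))).eq.symm, nsmul_eq_mul]
        rw [hc1, LinearMap.smul_apply, Module.End.mul_apply]
        rw [hB, smul_pow, LinearMap.smul_apply, LinearMap.lTensor_pow, map_smul,
          LinearMap.lTensor_tmul, hA', LinearMap.rTensor_pow, LinearMap.rTensor_tmul]
      rw [hterm (p - 1), show m - (p - 1) = n - 1 by omega, hNk (n - 1) (by omega)]
    · intro k hk hkne
      have hkm : k < m + 1 := Finset.mem_range.1 hk
      have hterm : (A ^ k * B ^ (m - k) * (m.choose k : Module.End ℂ (W ⊗[ℂ] (Fin n → ℂ))))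
          (w ⊗ₜ[ℂ] e0)
          = (m.choose k) • (c ^ (m - k)) • (((a ^ k) w) ⊗ₜ[ℂ] ((N ^ (m - k)) e0)) := by
        have hc1 : A ^ k * B ^ (m - k) * (m.choose k : Module.End ℂ (W ⊗[ℂ] (Fin n → ℂ)))
            = (m.choose k) • (A ^ k * B ^ (m - k)) := by
          rw [(Nat.cast_commute (m.choose k) (A ^ k * B ^ (m - k))).eq.symm, nsmul_eq_mul]
        rw [hc1, LinearMap.smul_apply, Module.End.mul_apply]
        rw [hB, smul_pow, LinearMap.smul_apply, LinearMap.lTensor_pow, map_smul,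
          LinearMap.lTensor_tmul, hA', LinearMap.rTensor_pow, LinearMap.rTensor_tmul]
      rw [hterm]
      rcases lt_or_gt_of_ne hkne with h | h
      · -- k < p - 1, so m - k ≥ n
        rw [hNzero (m - k) (by omega), tmul_zero, smul_zero, smul_zero]
      · -- k > p - 1, so k ≥ p and a ^ k = 0
        have : a ^ k = 0 := by
          have hk' : k = p + (k - p) := by omega
          rw [hk', pow_add, hp0, zero_mul]
        rw [this, LinearMap.zero_apply, zero_tmul, smul_zero, smul_zero]
  rw [hABm, LinearMap.zero_apply] at heval
  -- contract with the projection onto the (n-1)-st coordinate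
  set φ : (Fin n → ℂ) →ₗ[ℂ] ℂ := LinearMap.proj (⟨n - 1, by omega⟩ : Fin n) with hφ
  set F : (W ⊗[ℂ] (Fin n → ℂ)) →ₗ[ℂ] W :=
    TensorProduct.lift (((LinearMap.lsmul ℂ W).comp φ).flip) with hF
  have hFtmul : ∀ (v : W) (z : Fin n → ℂ), F (v ⊗ₜ[ℂ] z) = φ z • v := fun v z => rfl
  have h0 := congrArg F heval.symm
  rw [map_zero, map_nsmul, map_smul, hFtmul] at h0
  have hφ1 : φ (Pi.single (⟨n - 1, by omega⟩ : Fin n) 1) = 1 := by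
    simp [hφ]
  rw [hφ1, one_smul] at h0
  have hch : (m.choose (p - 1)) ≠ 0 := Nat.choose_pos (by omega) |>.ne'
  have hcn : c ^ (n - 1) ≠ 0 := pow_ne_zero _ hc
  rw [← Nat.cast_smul_eq_nsmul ℂ, smul_smul] at h0
  exact hw (by
    have := (smul_eq_zero.1 h0).resolve_left
      (mul_ne_zero (Nat.cast_ne_zero.2 hch) hcn)
    exact this)
end

section
/- Let A be an associative ℂ-algebra, let P ≥ 1, and let v : Fin P → A satisfy v i * v j = −(v j * v i) for all i, j (in particular each v i squares to zero). Then for every function σ : Fin (P+1) → Fin P, the ordered product v (σ 0) * v (σ 1) * ⋯ * v (σ P) of P+1 factors equals 0. -/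
lemma sq_zero_of_anti {A : Type*} [Ring A] [Algebra ℂ A] (x : A) (h : x * x = -(x * x)) :
    x * x = 0 := by
  have h2 : (2 : ℂ) • (x * x) = 0 := by
    rw [two_smul]
    nth_rewrite 1 [h]
    exact neg_add_cancel _
  have : x * x = ((2 : ℂ)⁻¹ * 2) • (x * x) := by norm_num
  rw [this, mul_smul, h2, smul_zero]

lemma mul_prod_zero_of_mem {A : Type*} [Ring A] [Algebra ℂ A] {P : ℕ} (v : Fin P → A)
    (hanti : ∀ i j, v i * v j = -(v j * v i)) :
    ∀ (t : List (Fin P)) (a : Fin P), a ∈ t → v a * (t.map v).prod = 0 := by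
  intro t
  induction t with
  | nil => intro a ha; simp at ha
  | cons b s ih =>
    intro a ha
    rcases List.mem_cons.mp ha with rfl | hmem
    · simp only [List.map_cons, List.prod_cons, ← mul_assoc,
        sq_zero_of_anti (v a) (hanti a a), zero_mul]
    · simp only [List.map_cons, List.prod_cons, ← mul_assoc, hanti a b]
      rw [neg_mul, mul_assoc, ih a hmem, mul_zero, neg_zero]

lemma prod_zero_of_not_nodup {A : Type*} [Ring A] [Algebra ℂ A] {P : ℕ} (v : Fin P → A)
    (hanti : ∀ i j, v i * v j = -(v j * v i)) :
    ∀ (t : List (Fin P)), ¬ t.Nodup → (t.map v).prod = 0 := by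
  intro t
  induction t with
  | nil => intro h; simp at h
  | cons b s ih =>
    intro h
    rw [List.nodup_cons] at h
    push_neg at h
    simp only [List.map_cons, List.prod_cons]
    by_cases hb : b ∈ s
    · exact mul_prod_zero_of_mem v hanti s b hb
    · rw [ih (h hb), mul_zero]

/-- Since the odd lowering generators anticommute, any ordered product of `P + 1` of them
vanishes: the Verma module of a type I superalgebra has exactly `P` layers (Section 2). -/
theorem anticommuting_product_vanishes
    (A : Type*) [Ring A] [Algebra ℂ A] (P : ℕ) (hP : 1 ≤ P)
    (v : Fin P → A) (hanti : ∀ i j, v i * v j = -(v j * v i)) :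
    ∀ σ : Fin (P + 1) → Fin P, (List.ofFn fun i : Fin (P + 1) => v (σ i)).prod = 0 := by
  intro σ
  have hninj : ¬ Function.Injective σ := by
    intro hinj
    have := Fintype.card_le_of_injective σ hinj
    simp at this
  have hkey : (List.ofFn fun i : Fin (P + 1) => v (σ i)) = (List.ofFn σ).map v := by
    rw [List.map_ofFn]
    rfl
  rw [hkey]
  apply prod_zero_of_not_nodup v hanti
  rw [List.nodup_ofFn]
  exact hninj
end

section
/- Let A be an associative ℂ-algebra, let P ≥ 1, let v : Fin P → A satisfy v i * v j = −(v j * v i) for all i, j, let e ∈ A, and let c : Fin P → Fin P → ℂ satisfy c i i = 0 for all i and e * v i − v i * e = ∑_j (c i j) • v j for all i. Then e commutes with the ordered product of all the v's: e * (v 0 * v 1 * ⋯ * v (P−1)) = (v 0 * v 1 * ⋯ * v (P−1)) * e. -/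
/-- If the commutator of `e` with each anticommuting generator `v i` is a linear
combination of the `v j` with `j ≠ i`, then `e` commutes with the ordered product of all
the `v`'s: the state `w⁻Λ` is annihilated by the even raising generators (Section 2). -/
theorem even_commutes_with_top_product
    (A : Type*) [Ring A] [Algebra ℂ A] (P : ℕ) (hP : 1 ≤ P)
    (v : Fin P → A) (hanti : ∀ i j, v i * v j = -(v j * v i))
    (e : A) (c : Fin P → Fin P → ℂ) (hdiag : ∀ i, c i i = 0)
    (hcomm : ∀ i, e * v i - v i * e = ∑ j, c i j • v j) :
    e * (List.ofFn v).prod = (List.ofFn v).prod * e := by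
  have hsq : ∀ i, v i * v i = 0 := by
    intro i
    have h2 : (2 : ℂ) • (v i * v i) = 0 := by
      rw [two_smul]
      nth_rewrite 1 [hanti i i]
      abel
    simpa using (smul_eq_zero.mp h2).resolve_left (by norm_num)
  have hleft : ∀ (j : Fin P) (l : List (Fin P)), j ∈ l → v j * (l.map v).prod = 0 := by
    intro j l
    induction l with
    | nil => simp
    | cons i t ih =>
      intro hm
      rcases List.mem_cons.mp hm with h | h
      · subst h; simp [List.map_cons, List.prod_cons, ← mul_assoc, hsq]
      · rw [List.map_cons, List.prod_cons, ← mul_assoc, hanti j i, neg_mul,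
          mul_assoc, ih h, mul_zero, neg_zero]
  have hswap : ∀ (l : List (Fin P)) (j : Fin P),
      (l.map v).prod * v j = ((-1 : ℂ) ^ l.length) • (v j * (l.map v).prod) := by
    intro l j
    induction l with
    | nil => simp
    | cons i t ih =>
      rw [List.map_cons, List.prod_cons, mul_assoc, ih, mul_smul_comm,
        ← mul_assoc, hanti i j, neg_mul, List.length_cons, pow_succ, mul_assoc]
      rw [smul_neg, ← neg_smul, mul_neg_one]
  have hright : ∀ (j : Fin P) (l : List (Fin P)), j ∈ l → (l.map v).prod * v j = 0 := by
    intro j l hm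
    rw [hswap, hleft j l hm, smul_zero]
  have main : ∀ (l₂ l₁ : List (Fin P)), (∀ j : Fin P, j ∈ l₁ ∨ j ∈ l₂) →
      (l₁.map v).prod * (e * (l₂.map v).prod) = (l₁.map v).prod * ((l₂.map v).prod * e) := by
    intro l₂
    induction l₂ with
    | nil => simp
    | cons i t ih =>
      intro l₁ hcov
      have hev : e * v i = v i * e + ∑ j, c i j • v j := by
        have h := hcomm i; linear_combination (norm := noncomm_ring) h
      have hsum : ∑ j, c i j • ((l₁.map v).prod * v j * (t.map v).prod) = 0 := by
        apply Finset.sum_eq_zero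
        intro j _
        by_cases hji : j = i
        · subst hji; rw [hdiag, zero_smul]
        · rcases hcov j with h | h
          · rw [hright j l₁ h, zero_mul, smul_zero]
          · have ht : j ∈ t := (List.mem_cons.mp h).resolve_left hji
            rw [mul_assoc, hleft j t ht, mul_zero, smul_zero]
      have step : (l₁.map v).prod * (e * ((i :: t).map v).prod)
          = ((l₁ ++ [i]).map v).prod * (e * (t.map v).prod) := by
        rw [List.map_cons, List.prod_cons, List.map_append, List.prod_append]
        calc (l₁.map v).prod * (e * (v i * (t.map v).prod))
            = (l₁.map v).prod * (e * v i) * (t.map v).prod := by noncomm_ring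
          _ = (l₁.map v).prod * (v i * e + ∑ j, c i j • v j) * (t.map v).prod := by rw [hev]
          _ = (l₁.map v).prod * (v i * (e * (t.map v).prod))
              + ∑ j, c i j • ((l₁.map v).prod * v j * (t.map v).prod) := by
                rw [mul_add, add_mul, Finset.mul_sum, Finset.sum_mul]
                simp only [mul_smul_comm, smul_mul_assoc, mul_assoc]
          _ = (l₁.map v).prod * (v i * (e * (t.map v).prod)) := by rw [hsum, add_zero]
          _ = ((l₁.map v).prod * [v i].prod) * (e * (t.map v).prod) := by
                simp [mul_assoc]
          _ = _ := by simp
      have hcov' : ∀ j : Fin P, j ∈ l₁ ++ [i] ∨ j ∈ t := by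
        intro j
        rcases hcov j with h | h
        · exact Or.inl (List.mem_append.mpr (Or.inl h))
        · rcases List.mem_cons.mp h with h | h
          · exact Or.inl (List.mem_append.mpr (Or.inr (by simp [h])))
          · exact Or.inr h
      rw [step, ih (l₁ ++ [i]) hcov']
      rw [List.map_append, List.prod_append, List.map_cons, List.prod_cons]
      simp [mul_assoc]
  have h := main (List.finRange P) [] (fun j => Or.inr (List.mem_finRange j))
  simpa [List.ofFn_eq_map] using h
end
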